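/- In a faithful arborescence representation (T, φ) of the beach 𝒢 of a maximal cross-free family ℒ of cuts of a graph on [n]: the root is labeled by vertex 1 and has out-degree 1, T has exactly n−1 leaves with distinct labels from {2,…,n}, and every internal vertex is unlabeled with out-degree 2. -/

import Mathlib

/-!
The edge into a vertex `v` of the arborescence represents the set of labels below `v`, and
these sets form a laminar family. By maximality of `ℒ`, a shore avoiding vertex `1` that
crosses no member of `ℒ` belongs to the beach, so it is the label set of some edge. Applied
to the singletons `{u}` this shows that every `u ≠ 1` labels a leaf, and applied to
`{2,…,n}` that the root has a single child. At an internal vertex, faithfulness rules out a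
single child (it would represent the same set as its parent), while the union of the label
sets of two children crosses no subtree, hence is the label set of an edge, which leaves no
room for a third child.
-/

open Finset

/-- Two finite sets overlap if their intersection and both differences are nonempty. -/
def overlap {V : Type*} [DecidableEq V] (X Y : Finset V) : Prop :=
  (X ∩ Y).Nonempty ∧ (X \ Y).Nonempty ∧ (Y \ X).Nonempty

/-- Two shores cross if all four corner sets are nonempty. -/
def crossing {V : Type*} [DecidableEq V] [Fintype V] (X Y : Finset V) : Prop :=
  (X ∩ Y).Nonempty ∧ (X \ Y).Nonempty ∧ (Y \ X).Nonempty ∧ (Xᶜ ∩ Yᶜ).Nonempty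

/-- X is the shore of a cut: nonempty and proper. -/
def isCutShore {V : Type*} [Fintype V] (X : Finset V) : Prop :=
  X.Nonempty ∧ X ≠ Finset.univ

/-- The weight of the cut Δ(X) in the weighted graph with (symmetric) weights w. -/
noncomputable def cutWeight {V : Type*} [DecidableEq V] [Fintype V]
    (w : V → V → ℝ) (X : Finset V) : ℝ :=
  (1/2) * ∑ p : V × V,
    if (p.1 ∈ X ∧ p.2 ∉ X) ∨ (p.2 ∈ X ∧ p.1 ∉ X) then w p.1 p.2 else 0

/-- Δ(X) is a minimum cut. -/
def isMinCut {V : Type*} [DecidableEq V] [Fintype V] (w : V → V → ℝ) (X : Finset V) : Prop :=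
  isCutShore X ∧ ∀ Y : Finset V, isCutShore Y → cutWeight w X ≤ cutWeight w Y

/-- The characteristic vector of the cut Δ(X) among the edges (pairs of positive weight). -/
noncomputable def cutVec {V : Type*} [DecidableEq V] [Fintype V]
    (w : V → V → ℝ) (X : Finset V) : V × V → ℝ :=
  fun p => if (((p.1 ∈ X ∧ p.2 ∉ X) ∨ (p.2 ∈ X ∧ p.1 ∉ X)) ∧ 0 < w p.1 p.2) then 1 else 0


section

variable {α V : Type*} [DecidableEq α]

structure IsRootPaths (r : α) (p : α → α) (P : α → Finset α) : Prop where
  parent_root : p r = r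
  reach_root : ∀ v, ∃ k, p^[k] v = r
  path_root : P r = ∅
  path_parent : ∀ v, v ≠ r → P v = insert v (P (p v))

def labelsBelow [Fintype V] (P : α → Finset α) (φ : V → α) (v : α) : Finset V :=
  univ.filter fun u => v ∈ P (φ u)

@[simp]
theorem mem_labelsBelow [Fintype V] {P : α → Finset α} {φ : V → α} {v : α} {u : V} :
    u ∈ labelsBelow P φ v ↔ v ∈ P (φ u) := by
  simp [labelsBelow]

section crossing

variable [DecidableEq V] [Fintype V] {X Y : Finset V}

theorem crossing.not_subset (h : crossing X Y) : ¬ X ⊆ Y := by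
  obtain ⟨-, hXY, -, -⟩ := h
  rwa [← sdiff_nonempty]

theorem crossing.not_superset (h : crossing X Y) : ¬ Y ⊆ X := by
  obtain ⟨-, -, hYX, -⟩ := h
  rwa [← sdiff_nonempty]

theorem crossing.not_disjoint (h : crossing X Y) : ¬ Disjoint X Y := by
  obtain ⟨hXY, -, -, -⟩ := h
  rwa [← not_disjoint_iff_nonempty_inter] at hXY

theorem crossing_compl_right : crossing X Yᶜ ↔ crossing X Y := by
  simp only [crossing, sdiff_eq_inter_compl, compl_compl]
  constructor <;>
    exact fun ⟨h₁, h₂, h₃, h₄⟩ =>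
      ⟨h₂, h₁, by rwa [inter_comm], by rwa [inter_comm]⟩

theorem not_crossing_singleton (u : V) : ¬ crossing {u} Y := by
  rintro ⟨⟨a, ha⟩, ⟨b, hb⟩, -, -⟩
  simp only [mem_sdiff, mem_inter, mem_singleton] at ha hb
  exact hb.2 (by rw [hb.1, ← ha.1]; exact ha.2)

theorem not_crossing_compl_singleton (u : V) : ¬ crossing {u}ᶜ Y := by
  rintro ⟨-, -, ⟨a, ha⟩, ⟨b, hb⟩⟩
  simp only [mem_sdiff, mem_inter, mem_compl, mem_singleton, not_not] at ha hb
  exact hb.2 (by rw [hb.1, ← ha.2]; exact ha.1)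

end crossing

namespace IsRootPaths

variable {r : α} {p : α → α} {P : α → Finset α} {v w x y : α}

theorem iterate_root (hT : IsRootPaths r p P) (k : ℕ) : p^[k] r = r :=
  Function.iterate_fixed hT.parent_root k

theorem mem_iff (hT : IsRootPaths r p P) : x ∈ P v ↔ x ≠ r ∧ ∃ i, p^[i] v = x := by
  have root : x ∈ P r ↔ x ≠ r ∧ ∃ i, p^[i] r = x := by
    simp only [hT.path_root, hT.iterate_root, notMem_empty, false_iff, not_and, not_exists]
    exact fun hx _ h => hx h.symm
  obtain ⟨k, hk⟩ := hT.reach_root v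
  induction k generalizing v with
  | zero => obtain rfl : v = r := hk; exact root
  | succ k ih =>
    rcases eq_or_ne v r with rfl | hv
    · exact root
    have hparent : x ∈ P (p v) ↔ x ≠ r ∧ ∃ i, p^[i] (p v) = x := ih hk
    rw [hT.path_parent v hv, mem_insert, hparent]
    constructor
    · rintro (rfl | ⟨hx, i, rfl⟩)
      exacts [⟨hv, 0, rfl⟩, ⟨hx, i + 1, rfl⟩]
    · rintro ⟨hx, _ | i, rfl⟩
      exacts [Or.inl rfl, Or.inr ⟨hx, i, rfl⟩]

theorem ne_root_of_mem (hT : IsRootPaths r p P) (h : x ∈ P v) : x ≠ r :=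
  (hT.mem_iff.1 h).1

theorem nonempty_iff (hT : IsRootPaths r p P) : (P v).Nonempty ↔ v ≠ r := by
  refine ⟨?_, fun hv => ⟨v, hT.mem_iff.2 ⟨hv, 0, rfl⟩⟩⟩
  rintro ⟨x, hx⟩ rfl
  simp [hT.path_root] at hx

theorem self_mem (hT : IsRootPaths r p P) (hv : v ≠ r) : v ∈ P v :=
  hT.mem_iff.2 ⟨hv, 0, rfl⟩

theorem mem_trans (hT : IsRootPaths r p P) (hx : x ∈ P v) (hy : y ∈ P x) : y ∈ P v := by
  obtain ⟨-, i, rfl⟩ := hT.mem_iff.1 hx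
  obtain ⟨hy, j, rfl⟩ := hT.mem_iff.1 hy
  exact hT.mem_iff.2 ⟨hy, j + i, Function.iterate_add_apply p j i v⟩

theorem parent_mem (hT : IsRootPaths r p P) (hx : x ∈ P v) (hpx : p x ≠ r) : p x ∈ P v := by
  obtain ⟨-, i, rfl⟩ := hT.mem_iff.1 hx
  exact hT.mem_iff.2 ⟨hpx, i + 1, Function.iterate_succ_apply' p i v⟩

theorem mem_total (hT : IsRootPaths r p P) (hx : x ∈ P v) (hy : y ∈ P v) :
    x ∈ P y ∨ y ∈ P x := by
  obtain ⟨hx, i, rfl⟩ := hT.mem_iff.1 hx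
  obtain ⟨hy, j, rfl⟩ := hT.mem_iff.1 hy
  rcases le_total i j with hij | hij
  · refine Or.inr (hT.mem_iff.2 ⟨hy, j - i, ?_⟩)
    rw [← Function.iterate_add_apply, Nat.sub_add_cancel hij]
  · refine Or.inl (hT.mem_iff.2 ⟨hx, i - j, ?_⟩)
    rw [← Function.iterate_add_apply, Nat.sub_add_cancel hij]

theorem eq_root_of_iterate_eq_self (hT : IsRootPaths r p P) {k : ℕ} (hk : 0 < k)
    (h : p^[k] x = x) : x = r := by
  obtain ⟨K, hK⟩ := hT.reach_root x
  have hper : p^[k * K] x = x := Function.IsPeriodicPt.mul_const h K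
  have hK_le : K ≤ k * K := Nat.le_mul_of_pos_left K hk
  rw [← Nat.sub_add_cancel hK_le, Function.iterate_add_apply, hK, hT.iterate_root] at hper
  exact hper.symm

theorem eq_root_of_parent_eq_self (hT : IsRootPaths r p P) (h : p x = x) : x = r :=
  hT.eq_root_of_iterate_eq_self one_pos h

theorem eq_of_mem_of_parent_eq (hT : IsRootPaths r p P) (hx : x ∈ P y) (h : p x = p y) :
    x = y := by
  obtain ⟨hxr, _ | i, rfl⟩ := hT.mem_iff.1 hx
  · rfl
  have hper : p^[i + 1] (p y) = p y := by
    rw [← Function.iterate_succ_apply, Function.iterate_succ_apply', h]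
  have hpy := hT.eq_root_of_iterate_eq_self i.succ_pos hper
  exact absurd (by rw [Function.iterate_succ_apply, hpy, hT.iterate_root]) hxr

theorem eq_of_parent_eq (hT : IsRootPaths r p P) (hx : x ∈ P v) (hy : y ∈ P v)
    (h : p x = p y) : x = y := by
  rcases hT.mem_total hx hy with hxy | hyx
  exacts [hT.eq_of_mem_of_parent_eq hxy h, (hT.eq_of_mem_of_parent_eq hyx h.symm).symm]

theorem exists_mem_parent_eq_of_iterate (hT : IsRootPaths r p P) {k : ℕ} (hk : p^[k] w = x)
    (hw : w ≠ r) (hxw : x ≠ w) : ∃ c ∈ P w, p c = x := by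
  induction k generalizing w with
  | zero => exact absurd hk.symm hxw
  | succ k ih =>
    by_cases hpw : p w = x
    · exact ⟨w, hT.self_mem hw, hpw⟩
    have hpw_ne : p w ≠ r := by
      intro h
      rw [Function.iterate_succ_apply, h, hT.iterate_root] at hk
      exact hpw (h.trans hk)
    obtain ⟨c, hc, hpc⟩ := ih hk hpw_ne (Ne.symm hpw)
    exact ⟨c, hT.path_parent w hw ▸ mem_insert_of_mem hc, hpc⟩

theorem exists_child_mem (hT : IsRootPaths r p P) (hv : v ∈ P w) (hvw : v ≠ w) :
    ∃ c ∈ P w, p c = v := by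
  obtain ⟨-, i, hi⟩ := hT.mem_iff.1 hv
  exact hT.exists_mem_parent_eq_of_iterate hi (hT.nonempty_iff.1 ⟨v, hv⟩) hvw

theorem exists_child_root_mem (hT : IsRootPaths r p P) (hw : w ≠ r) : ∃ c ∈ P w, p c = r := by
  obtain ⟨k, hk⟩ := hT.reach_root w
  exact hT.exists_mem_parent_eq_of_iterate hk hw (Ne.symm hw)

section labels

variable [Fintype V] {φ : V → α} {c c' e : α} {u : V}

theorem labelsBelow_root (hT : IsRootPaths r p P) : labelsBelow P φ r = ∅ := by
  ext u
  simpa using fun h => hT.ne_root_of_mem h rfl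

theorem labelsBelow_subset_of_mem (hT : IsRootPaths r p P) (h : w ∈ P v) :
    labelsBelow P φ v ⊆ labelsBelow P φ w := fun _ hu =>
  mem_labelsBelow.2 (hT.mem_trans (mem_labelsBelow.1 hu) h)

theorem labelsBelow_subset_of_parent_eq (hT : IsRootPaths r p P) (hc : p c = v) (hv : v ≠ r) :
    labelsBelow P φ c ⊆ labelsBelow P φ v := fun _ hu =>
  mem_labelsBelow.2 (hc ▸ hT.parent_mem (mem_labelsBelow.1 hu) (hc ▸ hv))

theorem disjoint_labelsBelow (hT : IsRootPaths r p P) (hpc : p c = p c') (hne : c ≠ c') :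
    Disjoint (labelsBelow P φ c) (labelsBelow P φ c') :=
  disjoint_left.2 fun _ hu hu' =>
    hne (hT.eq_of_parent_eq (mem_labelsBelow.1 hu) (mem_labelsBelow.1 hu') hpc)

theorem exists_child_of_mem_labelsBelow (hT : IsRootPaths r p P)
    (hu : u ∈ labelsBelow P φ v) (hv : φ u ≠ v) :
    ∃ c, p c = v ∧ c ≠ r ∧ u ∈ labelsBelow P φ c := by
  obtain ⟨c, hc, hpc⟩ := hT.exists_child_mem (mem_labelsBelow.1 hu) (Ne.symm hv)
  exact ⟨c, hpc, hT.ne_root_of_mem hc, mem_labelsBelow.2 hc⟩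

theorem labelsBelow_trichotomy (hT : IsRootPaths r p P) (v e : α) :
    labelsBelow P φ v ⊆ labelsBelow P φ e ∨
      (∃ c, p c = v ∧ labelsBelow P φ e ⊆ labelsBelow P φ c) ∨
      Disjoint (labelsBelow P φ v) (labelsBelow P φ e) := by
  by_cases hev : e ∈ P v
  · exact Or.inl (hT.labelsBelow_subset_of_mem hev)
  by_cases hve : v ∈ P e
  · rcases eq_or_ne v e with rfl | hne
    · exact Or.inl subset_rfl
    obtain ⟨c, hce, hpc⟩ := hT.exists_child_mem hve hne
    exact Or.inr (Or.inl ⟨c, hpc, hT.labelsBelow_subset_of_mem hce⟩)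
  refine Or.inr (Or.inr (disjoint_left.2 fun u hv he => ?_))
  rcases hT.mem_total (mem_labelsBelow.1 hv) (mem_labelsBelow.1 he) with h | h
  exacts [hve h, hev h]

theorem not_crossing_union_labelsBelow [DecidableEq V] (hT : IsRootPaths r p P) (hv : v ≠ r)
    (h₀ : p c = v) (h₁ : p c' = v) (e : α) :
    ¬ crossing (labelsBelow P φ c ∪ labelsBelow P φ c') (labelsBelow P φ e) := by
  have hsub : labelsBelow P φ c ∪ labelsBelow P φ c' ⊆ labelsBelow P φ v :=
    union_subset (hT.labelsBelow_subset_of_parent_eq h₀ hv)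
      (hT.labelsBelow_subset_of_parent_eq h₁ hv)
  intro hcross
  rcases hT.labelsBelow_trichotomy (φ := φ) v e with hve | ⟨d, hpd, hed⟩ | hdisj
  · exact hcross.not_subset (hsub.trans hve)
  · by_cases hd : d = c ∨ d = c'
    · refine hcross.not_superset (hed.trans ?_)
      rcases hd with rfl | rfl
      exacts [subset_union_left, subset_union_right]
    · obtain ⟨hdc, hdc'⟩ := not_or.1 hd
      refine hcross.not_disjoint (Disjoint.mono_left hed ?_).symm
      exact disjoint_union_right.2 ⟨hT.disjoint_labelsBelow (hpd.trans h₀.symm) hdc,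
        hT.disjoint_labelsBelow (hpd.trans h₁.symm) hdc'⟩
  · exact hcross.not_disjoint (hdisj.mono_left hsub)

end labels

end IsRootPaths

theorem isCutShore_of_notMem [Fintype V] {X : Finset V} {v₁ : V} (hX : X.Nonempty)
    (hv₁ : v₁ ∉ X) : isCutShore X :=
  ⟨hX, fun h => hv₁ (h ▸ mem_univ v₁)⟩

section beach

variable [DecidableEq V] [Fintype V] {v₁ : V} {L : Finset (Finset V)} {X : Finset V}

def IsCrossMaximal (L : Finset (Finset V)) : Prop :=
  ∀ X : Finset V, isCutShore X → X ∉ L → Xᶜ ∉ L → ∃ Y ∈ L, crossing X Y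

def beach (v₁ : V) (L : Finset (Finset V)) : Finset (Finset V) :=
  L.image fun X => if v₁ ∈ X then Xᶜ else X

theorem notMem_of_mem_beach (hX : X ∈ beach v₁ L) : v₁ ∉ X := by
  obtain ⟨Y, -, rfl⟩ := mem_image.1 hX
  split_ifs with h
  exacts [notMem_compl.2 h, h]

theorem nonempty_of_mem_beach (hshore : ∀ X ∈ L, isCutShore X) (hX : X ∈ beach v₁ L) :
    X.Nonempty := by
  obtain ⟨Y, hY, rfl⟩ := mem_image.1 hX
  obtain ⟨hne, huniv⟩ := hshore Y hY
  split_ifs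
  exacts [nonempty_iff_ne_empty.2 fun h => huniv ((compl_eq_empty_iff Y).1 h), hne]

theorem mem_beach_of_forall_not_crossing (hmaximal : IsCrossMaximal L)
    (hX : isCutShore X) (hv₁ : v₁ ∉ X) (hcross : ∀ Y ∈ beach v₁ L, ¬ crossing X Y) :
    X ∈ beach v₁ L := by
  by_cases hXL : X ∈ L
  · exact mem_image.2 ⟨X, hXL, if_neg hv₁⟩
  by_cases hXcL : Xᶜ ∈ L
  · exact mem_image.2 ⟨Xᶜ, hXcL, by rw [if_pos (mem_compl.2 hv₁), compl_compl]⟩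
  obtain ⟨Y, hY, hXY⟩ := hmaximal X hX hXL hXcL
  refine (hcross _ (mem_image_of_mem _ hY) ?_).elim
  split_ifs
  exacts [crossing_compl_right.2 hXY, hXY]

end beach

section representation

variable [Fintype V]

structure IsFaithfulRep (B : Finset (Finset V)) (r : α) (p : α → α) (φ : V → α)
    (P : α → Finset α) : Prop extends IsRootPaths r p P where
  labelsBelow_mem : ∀ v, v ≠ r → labelsBelow P φ v ∈ B
  exists_eq_labelsBelow : ∀ X ∈ B, ∃ v, v ≠ r ∧ X = labelsBelow P φ v
  labelsBelow_inj :
    ∀ v v', v ≠ r → v' ≠ r → labelsBelow P φ v = labelsBelow P φ v' → v = v'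

namespace IsFaithfulRep

variable {r : α} {p : α → α} {φ : V → α} {P : α → Finset α} {u : V}
  {v c₀ c₁ c₂ : α}

theorem labelsBelow_ssubset_of_parent_eq {B : Finset (Finset V)}
    (hR : IsFaithfulRep B r p φ P) (hc : p c₀ = v) (hv : v ≠ r) (hc₀ : c₀ ≠ r) :
    labelsBelow P φ c₀ ⊂ labelsBelow P φ v :=
  Finset.ssubset_iff_subset_ne.2 ⟨hR.labelsBelow_subset_of_parent_eq hc hv, fun h =>
    hc₀ (hR.eq_root_of_parent_eq_self (hc.trans (hR.labelsBelow_inj c₀ v hc₀ hv h).symm))⟩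

theorem exists_child_ne {B : Finset (Finset V)} (hR : IsFaithfulRep B r p φ P) (hv : v ≠ r)
    (hunlabeled : ¬ ∃ u, φ u = v) (hc₀ : p c₀ = v) (hc₀r : c₀ ≠ r) :
    ∃ c₁, p c₁ = v ∧ c₁ ≠ r ∧ c₁ ≠ c₀ := by
  by_contra! honly
  refine (hR.labelsBelow_ssubset_of_parent_eq hc₀ hv hc₀r).ne ?_
  refine (hR.labelsBelow_subset_of_parent_eq hc₀ hv).antisymm fun u hu => ?_
  obtain ⟨c, hpc, hc, huc⟩ :=
    hR.exists_child_of_mem_labelsBelow hu fun h => hunlabeled ⟨u, h⟩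
  rwa [← honly c hpc hc]

variable [DecidableEq V] {v₁ : V} {L : Finset (Finset V)}

theorem notMem_labelsBelow (hR : IsFaithfulRep (beach v₁ L) r p φ P) (hv : v ≠ r) :
    v₁ ∉ labelsBelow P φ v :=
  notMem_of_mem_beach (hR.labelsBelow_mem v hv)

theorem labelsBelow_nonempty (hR : IsFaithfulRep (beach v₁ L) r p φ P)
    (hshore : ∀ X ∈ L, isCutShore X) (hv : v ≠ r) : (labelsBelow P φ v).Nonempty :=
  nonempty_of_mem_beach hshore (hR.labelsBelow_mem v hv)

theorem phi_eq_root (hR : IsFaithfulRep (beach v₁ L) r p φ P) : φ v₁ = r := by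
  by_contra h
  exact hR.notMem_labelsBelow h (mem_labelsBelow.2 (hR.self_mem h))

theorem exists_eq_labelsBelow_of_not_crossing (hR : IsFaithfulRep (beach v₁ L) r p φ P)
    (hmaximal : IsCrossMaximal L) {X : Finset V} (hX : isCutShore X) (hv₁ : v₁ ∉ X)
    (hcross : ∀ e, e ≠ r → ¬ crossing X (labelsBelow P φ e)) :
    ∃ v, v ≠ r ∧ X = labelsBelow P φ v := by
  refine hR.exists_eq_labelsBelow X (mem_beach_of_forall_not_crossing hmaximal hX hv₁ ?_)
  intro Y hY
  obtain ⟨e, he, rfl⟩ := hR.exists_eq_labelsBelow Y hY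
  exact hcross e he

theorem labelsBelow_phi (hR : IsFaithfulRep (beach v₁ L) r p φ P)
    (hmaximal : IsCrossMaximal L) (hu : u ≠ v₁) : labelsBelow P φ (φ u) = {u} := by
  have hv₁ : v₁ ∉ ({u} : Finset V) := by simpa using hu.symm
  obtain ⟨ℓ, -, hℓ⟩ := hR.exists_eq_labelsBelow_of_not_crossing hmaximal
    (isCutShore_of_notMem (singleton_nonempty u) hv₁) hv₁
    fun _ _ => not_crossing_singleton u
  have hℓu : ℓ ∈ P (φ u) := mem_labelsBelow.1 (hℓ ▸ mem_singleton_self u)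
  have hφu : φ u ≠ r := hR.nonempty_iff.1 ⟨ℓ, hℓu⟩
  exact (hR.labelsBelow_subset_of_mem hℓu).trans hℓ.superset |>.antisymm
    (singleton_subset_iff.2 (mem_labelsBelow.2 (hR.self_mem hφu)))

theorem phi_eq_root_iff (hR : IsFaithfulRep (beach v₁ L) r p φ P)
    (hmaximal : IsCrossMaximal L) : φ u = r ↔ u = v₁ := by
  refine ⟨fun h => by_contra fun hu => ?_, fun h => h ▸ hR.phi_eq_root⟩
  simpa [h, hR.labelsBelow_root] using hR.labelsBelow_phi hmaximal hu

theorem injective (hR : IsFaithfulRep (beach v₁ L) r p φ P) (hmaximal : IsCrossMaximal L) :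
    Function.Injective φ := by
  intro a b hab
  by_cases ha : a = v₁
  · rwa [ha, eq_comm, ← hR.phi_eq_root_iff hmaximal, ← hab, hR.phi_eq_root_iff hmaximal]
  have hb : b ≠ v₁ := fun hb =>
    ha (by rwa [← hR.phi_eq_root_iff hmaximal, hab, hR.phi_eq_root_iff hmaximal])
  exact singleton_injective <|
    (hR.labelsBelow_phi hmaximal ha).symm.trans (hab ▸ hR.labelsBelow_phi hmaximal hb)

theorem not_exists_child_phi (hR : IsFaithfulRep (beach v₁ L) r p φ P)
    (hshore : ∀ X ∈ L, isCutShore X) (hmaximal : IsCrossMaximal L)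
    (hu : u ≠ v₁) : ¬ ∃ c, p c = φ u ∧ c ≠ r := by
  rintro ⟨c, hpc, hc⟩
  have hφu : φ u ≠ r := (hR.phi_eq_root_iff hmaximal).not.2 hu
  have hsub := hR.labelsBelow_ssubset_of_parent_eq hpc hφu hc
  rw [hR.labelsBelow_phi hmaximal hu, ssubset_singleton_iff] at hsub
  exact (hR.labelsBelow_nonempty hshore hc).ne_empty hsub

theorem exists_phi_eq_of_not_exists_child (hR : IsFaithfulRep (beach v₁ L) r p φ P)
    (hshore : ∀ X ∈ L, isCutShore X) (hv : v ≠ r) (hleaf : ¬ ∃ c, p c = v ∧ c ≠ r) :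
    ∃ u, u ≠ v₁ ∧ φ u = v := by
  obtain ⟨u, hu⟩ := hR.labelsBelow_nonempty hshore hv
  refine ⟨u, fun h => hR.notMem_labelsBelow hv (h ▸ hu), by_contra fun hne => ?_⟩
  obtain ⟨c, hpc, hc, -⟩ := hR.exists_child_of_mem_labelsBelow hu hne
  exact hleaf ⟨c, hpc, hc⟩

theorem card_leaves [Fintype α] (hR : IsFaithfulRep (beach v₁ L) r p φ P)
    (hshore : ∀ X ∈ L, isCutShore X) (hmaximal : IsCrossMaximal L) :
    (univ.filter fun v => v ≠ r ∧ ¬ ∃ c, p c = v ∧ c ≠ r).card = Fintype.card V - 1 := by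
  have himage : (univ.erase v₁).image φ =
      univ.filter fun v => v ≠ r ∧ ¬ ∃ c, p c = v ∧ c ≠ r := by
    ext v
    simp only [mem_image, mem_erase, mem_univ, and_true, mem_filter, true_and]
    constructor
    · rintro ⟨u, hu, rfl⟩
      exact ⟨(hR.phi_eq_root_iff hmaximal).not.2 hu, hR.not_exists_child_phi hshore hmaximal hu⟩
    · rintro ⟨hv, hleaf⟩
      exact hR.exists_phi_eq_of_not_exists_child hshore hv hleaf
  rw [← himage, card_image_of_injective _ (hR.injective hmaximal),
    card_erase_of_mem (mem_univ v₁), card_univ]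

theorem card_root_children [Fintype α] [Nontrivial V] (hR : IsFaithfulRep (beach v₁ L) r p φ P)
    (hshore : ∀ X ∈ L, isCutShore X) (hmaximal : IsCrossMaximal L) :
    (univ.filter fun v => p v = r ∧ v ≠ r).card = 1 := by
  obtain ⟨u, hu⟩ := exists_ne v₁
  have hv₁ : v₁ ∉ ({v₁}ᶜ : Finset V) := by simp
  obtain ⟨w, hw, hS⟩ := hR.exists_eq_labelsBelow_of_not_crossing hmaximal
    (isCutShore_of_notMem ⟨u, by simpa using hu⟩ hv₁) hv₁
    fun _ _ => not_crossing_compl_singleton v₁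
  obtain ⟨c, hcw, hpc⟩ := hR.exists_child_root_mem hw
  rw [card_eq_one]
  refine ⟨c, eq_singleton_iff_unique_mem.2 ⟨by simp [hpc, hR.ne_root_of_mem hcw], ?_⟩⟩
  intro c' hc'
  rw [mem_filter] at hc'
  obtain ⟨u', hu'⟩ := hR.labelsBelow_nonempty hshore hc'.2.2
  have hu'v₁ : u' ≠ v₁ := fun h => hR.notMem_labelsBelow hc'.2.2 (h ▸ hu')
  have hwu' : w ∈ P (φ u') := mem_labelsBelow.1 (hS ▸ by simpa using hu'v₁)
  exact hR.eq_of_parent_eq (mem_labelsBelow.1 hu') (hR.mem_trans hwu' hcw)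
    (hc'.2.1.trans hpc.symm)

theorem not_exists_phi_eq_of_child (hR : IsFaithfulRep (beach v₁ L) r p φ P)
    (hshore : ∀ X ∈ L, isCutShore X) (hmaximal : IsCrossMaximal L)
    (hv : v ≠ r) (hchild : ∃ c, p c = v ∧ c ≠ r) : ¬ ∃ u, φ u = v := by
  rintro ⟨u, rfl⟩
  by_cases hu : u = v₁
  · exact hv (hu ▸ hR.phi_eq_root)
  · exact hR.not_exists_child_phi hshore hmaximal hu hchild

theorem eq_or_eq_of_parent_eq (hR : IsFaithfulRep (beach v₁ L) r p φ P)
    (hshore : ∀ X ∈ L, isCutShore X) (hmaximal : IsCrossMaximal L)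
    (hv : v ≠ r) (hc₀ : p c₀ = v) (hc₁ : p c₁ = v) (hc₂ : p c₂ = v)
    (hc₀r : c₀ ≠ r) (hc₁r : c₁ ≠ r) (hc₂r : c₂ ≠ r) (h₀₁ : c₀ ≠ c₁) :
    c₂ = c₀ ∨ c₂ = c₁ := by
  by_contra! h₂
  obtain ⟨u₀, hu₀⟩ := hR.labelsBelow_nonempty hshore hc₀r
  obtain ⟨u₁, hu₁⟩ := hR.labelsBelow_nonempty hshore hc₁r
  obtain ⟨u₂, hu₂⟩ := hR.labelsBelow_nonempty hshore hc₂r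
  have hv₁ : v₁ ∉ labelsBelow P φ c₀ ∪ labelsBelow P φ c₁ := by
    simp only [mem_union, not_or]
    exact ⟨hR.notMem_labelsBelow hc₀r, hR.notMem_labelsBelow hc₁r⟩
  obtain ⟨e, -, he⟩ := hR.exists_eq_labelsBelow_of_not_crossing hmaximal
    (isCutShore_of_notMem ⟨u₀, mem_union_left _ hu₀⟩ hv₁) hv₁
    fun e _ => hR.not_crossing_union_labelsBelow hv hc₀ hc₁ e
  by_cases hc₀e : c₀ ∈ P e
  · have hu₁c₀ := hR.labelsBelow_subset_of_mem hc₀e (he ▸ mem_union_right _ hu₁)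
    exact disjoint_left.1 (hR.disjoint_labelsBelow (hc₀.trans hc₁.symm) h₀₁) hu₁c₀ hu₁
  have he_path : e ∈ P c₀ := by
    have hu₀e : e ∈ P (φ u₀) := mem_labelsBelow.1 (he ▸ mem_union_left _ hu₀)
    exact (hR.mem_total (mem_labelsBelow.1 hu₀) hu₀e).resolve_left hc₀e
  have hev : e ∈ P v := by
    rw [hR.path_parent c₀ hc₀r, hc₀, mem_insert] at he_path
    exact he_path.resolve_left fun h => hc₀e (by rw [h]; exact hR.self_mem hc₀r)
  have hu₂X : u₂ ∈ labelsBelow P φ c₀ ∪ labelsBelow P φ c₁ := by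
    rw [he]
    exact hR.labelsBelow_subset_of_mem hev (hR.labelsBelow_subset_of_parent_eq hc₂ hv hu₂)
  rcases mem_union.1 hu₂X with h | h
  · exact disjoint_left.1 (hR.disjoint_labelsBelow (hc₂.trans hc₀.symm) h₂.1) hu₂ h
  · exact disjoint_left.1 (hR.disjoint_labelsBelow (hc₂.trans hc₁.symm) h₂.2) hu₂ h

theorem card_children_eq_two [Fintype α] (hR : IsFaithfulRep (beach v₁ L) r p φ P)
    (hshore : ∀ X ∈ L, isCutShore X) (hmaximal : IsCrossMaximal L)
    (hv : v ≠ r) (hchild : ∃ c, p c = v ∧ c ≠ r) :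
    (univ.filter fun c => p c = v ∧ c ≠ r).card = 2 := by
  obtain ⟨c₀, hc₀, hc₀r⟩ := hchild
  obtain ⟨c₁, hc₁, hc₁r, h₁₀⟩ := hR.exists_child_ne hv
    (hR.not_exists_phi_eq_of_child hshore hmaximal hv ⟨c₀, hc₀, hc₀r⟩) hc₀ hc₀r
  rw [card_eq_two]
  refine ⟨c₀, c₁, h₁₀.symm, ?_⟩
  ext c
  simp only [mem_filter, mem_univ, true_and, mem_insert, mem_singleton]
  constructor
  · rintro ⟨hc, hcr⟩
    exact hR.eq_or_eq_of_parent_eq hshore hmaximal hv hc₀ hc₁ hc hc₀r hc₁r hcr h₁₀.symm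
  · rintro (rfl | rfl)
    exacts [⟨hc₀, hc₀r⟩, ⟨hc₁, hc₁r⟩]

end IsFaithfulRep

end representation

end

/-- The arborescence is encoded by a parent map `p` with root `r`; the edge into a non-root
vertex `v` is identified with `v`, and `P v` is the set of edges on the path from the root to
`v`, so the set represented by the edge `v` is `{u | v ∈ P (φ u)}`. -/
theorem stmt19_general {V α : Type*} [DecidableEq V] [Fintype V] [DecidableEq α] [Fintype α]
    (n : ℕ) (hn : 2 ≤ n) (hcard : Fintype.card V = n) (v₁ : V)
    (L : Finset (Finset V))
    (hshore : ∀ X ∈ L, isCutShore X)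
    (hmaximal : ∀ X : Finset V, isCutShore X → X ∉ L → Xᶜ ∉ L → ∃ Y ∈ L, crossing X Y)
    (r : α) (p : α → α) (φ : V → α) (P : α → Finset α)
    (hp : p r = r) (hreach : ∀ v, ∃ k, p^[k] v = r)
    (hP0 : P r = ∅) (hPs : ∀ v, v ≠ r → P v = insert v (P (p v)))
    (hrep : ∀ v : α, v ≠ r →
      (Finset.univ.filter (fun u : V => v ∈ P (φ u))) ∈
        L.image (fun X => if v₁ ∈ X then Xᶜ else X))
    (hrep' : ∀ X ∈ L.image (fun X => if v₁ ∈ X then Xᶜ else X),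
      ∃ v : α, v ≠ r ∧ X = Finset.univ.filter (fun u : V => v ∈ P (φ u)))
    (hfaithful : ∀ v v' : α, v ≠ r → v' ≠ r →
      (Finset.univ.filter (fun u : V => v ∈ P (φ u))) =
        (Finset.univ.filter (fun u : V => v' ∈ P (φ u))) → v = v') :
    φ v₁ = r ∧
    (Finset.univ.filter (fun v : α => p v = r ∧ v ≠ r)).card = 1 ∧
    Function.Injective φ ∧
    (∀ u : V, u ≠ v₁ → φ u ≠ r ∧ ¬ ∃ v' : α, p v' = φ u ∧ v' ≠ r) ∧
    (∀ v : α, v ≠ r → (¬ ∃ v' : α, p v' = v ∧ v' ≠ r) → ∃ u : V, u ≠ v₁ ∧ φ u = v) ∧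
    (Finset.univ.filter
      (fun v : α => v ≠ r ∧ ¬ ∃ v' : α, p v' = v ∧ v' ≠ r)).card = n - 1 ∧
    (∀ v : α, v ≠ r → (∃ v' : α, p v' = v ∧ v' ≠ r) →
      (¬ ∃ u : V, φ u = v) ∧
      (Finset.univ.filter (fun v' : α => p v' = v ∧ v' ≠ r)).card = 2) := by
  have hR : IsFaithfulRep (beach v₁ L) r p φ P :=
    ⟨⟨hp, hreach, hP0, hPs⟩, hrep, hrep', hfaithful⟩
  have : Nontrivial V := Fintype.one_lt_card_iff_nontrivial.1 (by omega)
  refine ⟨hR.phi_eq_root, hR.card_root_children hshore hmaximal, hR.injective hmaximal,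
    fun u hu => ⟨(hR.phi_eq_root_iff hmaximal).not.2 hu,
      hR.not_exists_child_phi hshore hmaximal hu⟩,
    fun v hv hleaf => hR.exists_phi_eq_of_not_exists_child hshore hv hleaf,
    hcard ▸ hR.card_leaves hshore hmaximal,
    fun v hv hchild => ⟨hR.not_exists_phi_eq_of_child hshore hmaximal hv hchild,
      hR.card_children_eq_two hshore hmaximal hv hchild⟩⟩

/-- Structure of a faithful arborescence representation of the beach of a maximal cross-free
family `L` of cuts of a graph on `n` vertices.  The arborescence is encoded by a parent map
`p` with root `r`; the edge into a non-root vertex `v` is identified with `v`, and `P v` is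
the set of edges on the path from the root to `v`, so the set represented by the edge `v` is
`{u | v ∈ P (φ u)}`.  Conclusions: the root is labeled by the distinguished vertex `v₁` and
has out-degree 1; the labels are distinct, every vertex other than `v₁` labels a leaf and
every leaf is so labeled (hence there are exactly `n - 1` leaves); and every internal vertex
is unlabeled with out-degree 2. -/
theorem stmt19 {V α : Type*} [DecidableEq V] [Fintype V] [DecidableEq α] [Fintype α]
    (n : ℕ) (hn : 2 ≤ n) (hcard : Fintype.card V = n) (v₁ : V)
    (L : Finset (Finset V))
    (hshore : ∀ X ∈ L, isCutShore X)
    (hdist : ∀ X ∈ L, ∀ Y ∈ L, X ≠ Y → Y ≠ Xᶜ)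
    (hcrossfree : ∀ X ∈ L, ∀ Y ∈ L, ¬ crossing X Y)
    (hmaximal : ∀ X : Finset V, isCutShore X → X ∉ L → Xᶜ ∉ L → ∃ Y ∈ L, crossing X Y)
    (r : α) (p : α → α) (φ : V → α) (P : α → Finset α)
    (hp : p r = r) (hreach : ∀ v, ∃ k, p^[k] v = r)
    (hP0 : P r = ∅) (hPs : ∀ v, v ≠ r → P v = insert v (P (p v)))
    (hrep : ∀ v : α, v ≠ r →
      (Finset.univ.filter (fun u : V => v ∈ P (φ u))) ∈
        L.image (fun X => if v₁ ∈ X then Xᶜ else X))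
    (hrep' : ∀ X ∈ L.image (fun X => if v₁ ∈ X then Xᶜ else X),
      ∃ v : α, v ≠ r ∧ X = Finset.univ.filter (fun u : V => v ∈ P (φ u)))
    (hfaithful : ∀ v v' : α, v ≠ r → v' ≠ r →
      (Finset.univ.filter (fun u : V => v ∈ P (φ u))) =
        (Finset.univ.filter (fun u : V => v' ∈ P (φ u))) → v = v') :
    φ v₁ = r ∧
    (Finset.univ.filter (fun v : α => p v = r ∧ v ≠ r)).card = 1 ∧
    Function.Injective φ ∧
    (∀ u : V, u ≠ v₁ → φ u ≠ r ∧ ¬ ∃ v' : α, p v' = φ u ∧ v' ≠ r) ∧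
    (∀ v : α, v ≠ r → (¬ ∃ v' : α, p v' = v ∧ v' ≠ r) → ∃ u : V, u ≠ v₁ ∧ φ u = v) ∧
    (Finset.univ.filter
      (fun v : α => v ≠ r ∧ ¬ ∃ v' : α, p v' = v ∧ v' ≠ r)).card = n - 1 ∧
    (∀ v : α, v ≠ r → (∃ v' : α, p v' = v ∧ v' ≠ r) →
      (¬ ∃ u : V, φ u = v) ∧
      (Finset.univ.filter (fun v' : α => p v' = v ∧ v' ≠ r)).card = 2) :=
  stmt19_general n hn hcard v₁ L hshore hmaximal r p φ P hp hreach hP0 hPs hrep hrep' hfaithful
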